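/- arXiv:2411.16911 — 3 statements merged into one kernel-verified Lean document; each statement's English description precedes it below -/
import Mathlib

section
/- Let v, α, r > 0 and p_i, p_j ∈ ℝ² with p_i ≠ p_j and h := ‖p_i − p_j‖² − r² ≥ 0. Let β ∈ ℝ satisfy (p_j − p_i)/‖p_j − p_i‖ = (cos β, sin β), let φ ∈ ℝ, set ũ := v·(cos φ, sin φ) and Δ := arccos(min(1, α·h/(4·v·‖p_i − p_j‖))). Define θ* by: θ* = β − Δ if ∠(φ − β) ∈ (−Δ, 0); θ* = β + Δ if ∠(φ − β) ∈ [0, Δ) (when ∠(φ − β) = 0 the choice θ* = β − Δ is also valid); and θ* = φ if |∠(φ − β)| ≥ Δ. Then u* := v·(cos θ*, sin θ*) is a global minimizer of the function u ↦ ½‖u − ũ‖² over the set {u ∈ ℝ² : ‖u‖ = v and (α/2)·h + 2⟨p_i − p_j, u⟩ ≥ 0}. -/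
open Real

/-- Angular normalization: maps `a` to the unique value in `[-π, π)` congruent to `a` mod `2π`. -/
noncomputable def angNorm (a : ℝ) : ℝ :=
  2 * π * Int.fract ((a + π) / (2 * π)) - π

/-- The vector `(a, b)` in the Euclidean plane. -/
noncomputable def vec2 (a b : ℝ) : EuclideanSpace ℝ (Fin 2) := WithLp.toLp 2 ![a, b]

/-- 2D cross product `a × b = a₁·b₂ − a₂·b₁`. -/
noncomputable def cross2 (a b : EuclideanSpace ℝ (Fin 2)) : ℝ := a 0 * b 1 - a 1 * b 0

/-!
On the circle `‖u‖ = v` write `u = v (cos τ, sin τ)`. The objective is then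
`v² (1 - cos (τ - φ))` and the CBF condition reads `cos (τ - β) ≤ cos Δ`, so the feasible headings
are those at angular distance at least `Δ` from `β`. Maximizing `cos (τ - φ)` over them: if `φ` is
feasible it is optimal, and otherwise the boundary heading `β ± Δ` on the side of `φ` is.
-/

/-- The paper's `θ*`. -/
def IsSafetyFilterHeading (β φ Δ θ : ℝ) : Prop :=
  (angNorm (φ - β) ∈ Set.Ioo (-Δ) 0 ∧ θ = β - Δ)
    ∨ (angNorm (φ - β) ∈ Set.Ico 0 Δ ∧ θ = β + Δ)
    ∨ (angNorm (φ - β) = 0 ∧ θ = β - Δ)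
    ∨ (Δ ≤ |angNorm (φ - β)| ∧ θ = φ)

lemma norm_smul_vec2_cos_sin (v θ : ℝ) : ‖v • vec2 (cos θ) (sin θ)‖ = |v| := by
  simp [norm_smul, EuclideanSpace.norm_eq, vec2, Fin.sum_univ_two]

lemma inner_smul_vec2_cos_sin (a b β θ : ℝ) :
    inner ℝ (a • vec2 (cos β) (sin β)) (b • vec2 (cos θ) (sin θ)) = a * b * cos (θ - β) := by
  rw [real_inner_smul_left, real_inner_smul_right]
  simp [vec2, PiLp.inner_apply, Fin.sum_univ_two, cos_sub]
  ring

lemma norm_smul_vec2_cos_sin_sub_sq (v θ φ : ℝ) :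
    ‖v • vec2 (cos θ) (sin θ) - v • vec2 (cos φ) (sin φ)‖ ^ 2 = 2 * v ^ 2 * (1 - cos (θ - φ)) := by
  rw [norm_sub_sq_real, norm_smul_vec2_cos_sin, norm_smul_vec2_cos_sin, inner_smul_vec2_cos_sin,
    sq_abs, ← cos_neg, neg_sub]
  ring

lemma exists_eq_norm_smul_vec2_cos_sin (u : EuclideanSpace ℝ (Fin 2)) :
    ∃ θ, u = ‖u‖ • vec2 (cos θ) (sin θ) := by
  set z : ℂ := ⟨u 0, u 1⟩
  have hz : ‖z‖ = ‖u‖ := by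
    simp [Complex.norm_eq_sqrt_sq_add_sq, EuclideanSpace.norm_eq, z, Fin.sum_univ_two]
  refine ⟨Complex.arg z, ?_⟩
  ext i
  fin_cases i
  · simp [vec2, ← hz, Complex.norm_mul_cos_arg, z]
  · simp [vec2, ← hz, Complex.norm_mul_sin_arg, z]

lemma angNorm_mem_Icc (a : ℝ) : angNorm a ∈ Set.Icc (-π) π := by
  have h0 := Int.fract_nonneg ((a + π) / (2 * π))
  have h1 := Int.fract_lt_one ((a + π) / (2 * π))
  constructor <;> unfold angNorm <;> nlinarith [pi_pos]

lemma cos_sub_angNorm (x a : ℝ) : cos (x - angNorm a) = cos (x - a) := by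
  have hπ := pi_pos.ne'
  have : x - angNorm a = x - a + ⌊(a + π) / (2 * π)⌋ * (2 * π) := by
    unfold angNorm Int.fract
    field_simp
    ring
  rw [this, cos_add_int_mul_two_pi]

lemma cos_angNorm (a : ℝ) : cos (angNorm a) = cos a := by
  simpa using cos_sub_angNorm 0 a

lemma cos_sub_le_cos_sub_of_le_abs {Δ ψ t : ℝ} (hψ : 0 ≤ ψ) (hψΔ : ψ ≤ Δ)
    (ht : t ∈ Set.Icc (-π) π) (hΔt : Δ ≤ |t|) : cos (t - ψ) ≤ cos (Δ - ψ) := by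
  obtain ⟨htl, htr⟩ := ht
  rcases le_or_gt 0 t with ht0 | ht0
  · rw [abs_of_nonneg ht0] at hΔt
    exact cos_le_cos_of_nonneg_of_le_pi (by linarith) (by linarith) (by linarith)
  · rw [abs_of_neg ht0] at hΔt
    rw [← cos_neg, neg_sub]
    rcases le_or_gt (ψ - t) π with hle | hgt
    · exact cos_le_cos_of_nonneg_of_le_pi (by linarith) hle (by linarith)
    · rw [← cos_two_pi_sub]
      exact cos_le_cos_of_nonneg_of_le_pi (by linarith) (by linarith) (by linarith)

lemma cos_sub_le_cos_sub_of_cos_le {Δ ψ t : ℝ} (hψ : 0 ≤ ψ) (hψΔ : ψ ≤ Δ) (hΔ : Δ ≤ π)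
    (ht : cos t ≤ cos Δ) : cos (t - ψ) ≤ cos (Δ - ψ) := by
  have hΔt : Δ ≤ |angNorm t| := by
    by_contra! hlt
    have := cos_lt_cos_of_nonneg_of_le_pi (abs_nonneg _) hΔ hlt
    rw [cos_abs, cos_angNorm] at this
    linarith
  rw [← cos_neg, neg_sub, ← cos_sub_angNorm, ← cos_neg, neg_sub]
  exact cos_sub_le_cos_sub_of_le_abs hψ hψΔ (angNorm_mem_Icc t) hΔt

lemma cos_sub_le_cos_neg_sub_of_cos_le {Δ ψ t : ℝ} (hψ : -Δ ≤ ψ) (hψ0 : ψ ≤ 0) (hΔ : Δ ≤ π)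
    (ht : cos t ≤ cos Δ) : cos (t - ψ) ≤ cos (-Δ - ψ) := by
  calc cos (t - ψ) = cos (-t - -ψ) := by rw [← cos_neg]; ring_nf
    _ ≤ cos (Δ - -ψ) :=
      cos_sub_le_cos_sub_of_cos_le (neg_nonneg.2 hψ0) (neg_le.1 hψ) hΔ (by rwa [cos_neg])
    _ = cos (-Δ - ψ) := by rw [← cos_neg]; ring_nf

namespace IsSafetyFilterHeading

variable {β φ Δ θ : ℝ}

lemma cos_sub_le (hθ : IsSafetyFilterHeading β φ Δ θ) (hΔ₀ : 0 ≤ Δ) : cos (θ - β) ≤ cos Δ := by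
  rcases hθ with ⟨-, rfl⟩ | ⟨-, rfl⟩ | ⟨-, rfl⟩ | ⟨hφ, rfl⟩
  · simp
  · simp
  · simp
  · rw [← cos_angNorm, ← cos_abs]
    exact cos_le_cos_of_nonneg_of_le_pi hΔ₀ (abs_le.2 (angNorm_mem_Icc _)) hφ

lemma cos_sub_le_cos_sub (hθ : IsSafetyFilterHeading β φ Δ θ) (hΔ₀ : 0 ≤ Δ) (hΔ : Δ ≤ π) {τ : ℝ}
    (hτ : cos (τ - β) ≤ cos Δ) : cos (τ - φ) ≤ cos (θ - φ) := by
  have hshift : ∀ x, cos (x - φ) = cos (x - β - angNorm (φ - β)) := fun x => by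
    rw [cos_sub_angNorm, sub_sub_sub_cancel_right]
  rw [hshift τ]
  rcases hθ with ⟨⟨hl, hr⟩, rfl⟩ | ⟨⟨hl, hr⟩, rfl⟩ | ⟨hψ, rfl⟩ | ⟨-, rfl⟩
  · rw [hshift, sub_sub_cancel_left]
    exact cos_sub_le_cos_neg_sub_of_cos_le hl.le hr.le hΔ hτ
  · rw [hshift, add_sub_cancel_left]
    exact cos_sub_le_cos_sub_of_cos_le hl hr.le hΔ hτ
  · rw [hshift, sub_sub_cancel_left]
    exact cos_sub_le_cos_neg_sub_of_cos_le (by linarith) hψ.le hΔ hτ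
  · rw [← hshift, sub_self, cos_zero]
    exact cos_le_one _

end IsSafetyFilterHeading

lemma cos_le_cos_arccos_min_one_iff {x c : ℝ} (hx : x ≤ 1) (hc : 0 ≤ c) :
    x ≤ cos (arccos (min 1 c)) ↔ x ≤ c := by
  rw [cos_arccos (by linarith [le_min zero_le_one hc]) (min_le_left _ _), le_min_iff]
  exact and_iff_right hx

theorem explicit_solution_of_safety_filter_general
    (v α : ℝ) (hv : 0 < v) (hα : 0 < α)
    (p q : EuclideanSpace ℝ (Fin 2)) (hpq : p ≠ q)
    (h : ℝ) (hh0 : 0 ≤ h)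
    (β : ℝ) (hβ : (‖q - p‖)⁻¹ • (q - p) = vec2 (cos β) (sin β))
    (φ : ℝ) (utilde : EuclideanSpace ℝ (Fin 2)) (hut : utilde = v • vec2 (cos φ) (sin φ))
    (Δ : ℝ) (hΔ : Δ = arccos (min 1 (α * h / (4 * v * ‖p - q‖))))
    (θs : ℝ)
    (hθs : (angNorm (φ - β) ∈ Set.Ioo (-Δ) 0 ∧ θs = β - Δ)
        ∨ (angNorm (φ - β) ∈ Set.Ico 0 Δ ∧ θs = β + Δ)
        ∨ (angNorm (φ - β) = 0 ∧ θs = β - Δ)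
        ∨ (Δ ≤ |angNorm (φ - β)| ∧ θs = φ)) :
    (v • vec2 (cos θs) (sin θs)) ∈
        {u : EuclideanSpace ℝ (Fin 2) | ‖u‖ = v ∧ 0 ≤ α / 2 * h + 2 * (inner ℝ (p - q) u : ℝ)} ∧
      ∀ u ∈ {u : EuclideanSpace ℝ (Fin 2) | ‖u‖ = v ∧ 0 ≤ α / 2 * h + 2 * (inner ℝ (p - q) u : ℝ)},
        (1 / 2) * ‖v • vec2 (cos θs) (sin θs) - utilde‖ ^ 2 ≤ (1 / 2) * ‖u - utilde‖ ^ 2 := by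
  set ρ := ‖p - q‖
  have hρ : 0 < ρ := norm_pos_iff.2 (sub_ne_zero.2 hpq)
  have hpq_eq : p - q = (-ρ) • vec2 (cos β) (sin β) := by
    rw [← hβ, norm_sub_rev, smul_smul, neg_mul, mul_inv_cancel₀ hρ.ne', neg_smul, one_smul,
      neg_sub]
  have hcbf_iff : ∀ θ, 0 ≤ α / 2 * h + 2 * inner ℝ (p - q) (v • vec2 (cos θ) (sin θ)) ↔
      cos (θ - β) ≤ cos Δ := fun θ => by
    rw [hpq_eq, inner_smul_vec2_cos_sin, hΔ,
      cos_le_cos_arccos_min_one_iff (cos_le_one _) (by positivity), le_div_iff₀ (by positivity)]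
    constructor <;> intro _ <;> linarith
  have hΔ₀ : 0 ≤ Δ := hΔ ▸ arccos_nonneg _
  have hθs' : IsSafetyFilterHeading β φ Δ θs := hθs
  refine ⟨⟨by simp [norm_smul_vec2_cos_sin, hv.le], (hcbf_iff θs).2 (hθs'.cos_sub_le hΔ₀)⟩, ?_⟩
  rintro u ⟨hu, hcbf⟩
  obtain ⟨τ, rfl⟩ : ∃ τ, u = v • vec2 (cos τ) (sin τ) := hu ▸ exists_eq_norm_smul_vec2_cos_sin u
  have hopt := hθs'.cos_sub_le_cos_sub hΔ₀ (hΔ ▸ arccos_le_pi _) ((hcbf_iff τ).1 hcbf)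
  rw [hut, norm_smul_vec2_cos_sin_sub_sq, norm_smul_vec2_cos_sin_sub_sq]
  gcongr

/-- Theorem 1 of the paper: explicit solution of the CBF-based safety
filter. The corrected heading `θs` yields a global minimizer of `u ↦ ½‖u − ũ‖²` over the
set of constant-speed inputs satisfying the decentralized CBF condition. -/
theorem explicit_solution_of_safety_filter
    (v α r : ℝ) (hv : 0 < v) (hα : 0 < α) (hr : 0 < r)
    (p q : EuclideanSpace ℝ (Fin 2)) (hpq : p ≠ q)
    (h : ℝ) (hh : h = ‖p - q‖ ^ 2 - r ^ 2) (hh0 : 0 ≤ h)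
    (β : ℝ) (hβ : (‖q - p‖)⁻¹ • (q - p) = vec2 (cos β) (sin β))
    (φ : ℝ) (utilde : EuclideanSpace ℝ (Fin 2)) (hut : utilde = v • vec2 (cos φ) (sin φ))
    (Δ : ℝ) (hΔ : Δ = arccos (min 1 (α * h / (4 * v * ‖p - q‖))))
    (θs : ℝ)
    (hθs : (angNorm (φ - β) ∈ Set.Ioo (-Δ) 0 ∧ θs = β - Δ)
        ∨ (angNorm (φ - β) ∈ Set.Ico 0 Δ ∧ θs = β + Δ)
        ∨ (angNorm (φ - β) = 0 ∧ θs = β - Δ)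
        ∨ (Δ ≤ |angNorm (φ - β)| ∧ θs = φ)) :
    (v • vec2 (cos θs) (sin θs)) ∈
        {u : EuclideanSpace ℝ (Fin 2) | ‖u‖ = v ∧ 0 ≤ α / 2 * h + 2 * (inner ℝ (p - q) u : ℝ)} ∧
      ∀ u ∈ {u : EuclideanSpace ℝ (Fin 2) | ‖u‖ = v ∧ 0 ≤ α / 2 * h + 2 * (inner ℝ (p - q) u : ℝ)},
        (1 / 2) * ‖v • vec2 (cos θs) (sin θs) - utilde‖ ^ 2 ≤ (1 / 2) * ‖u - utilde‖ ^ 2 :=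
  explicit_solution_of_safety_filter_general v α hv hα p q hpq h hh0 β hβ φ utilde hut Δ hΔ θs hθs
end

section
/- Let v, θ, β ∈ ℝ, let p : ℝ → ℝ² be differentiable at t₀ with derivative p'(t₀) = v·(cos θ, sin θ), let T ∈ ℝ² with T ≠ p(t₀), and let φ ∈ ℝ satisfy (T − p(t₀))/‖T − p(t₀)‖ = (cos φ, sin φ). Then the function f(t) := ⟨(cos β, sin β), (T − p(t))/‖T − p(t)‖⟩ is differentiable at t₀ with f'(t₀) = v·sin(β − φ)·sin(φ − θ) / ‖T − p(t₀)‖. -/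
open Real

/-!
The derivative of the unit vector `u / ‖u‖` is `‖u‖⁻¹` times the component of `u'` orthogonal
to it. With `u = T - p`, `u' = -v (cos θ, sin θ)`, pairing with the bearing gives
`-v ‖u‖⁻¹ (cos (β - θ) - cos (φ - θ) cos (β - φ))`, and expanding
`cos (β - θ) = cos ((β - φ) + (φ - θ))` leaves the product of sines.
-/

section NormalizedCurve

open scoped RealInnerProductSpace

variable {F : Type*} [NormedAddCommGroup F] [InnerProductSpace ℝ F] {f : ℝ → F} {f' : F} {x : ℝ}

theorem HasDerivAt.norm (hf : HasDerivAt f f' x) (h0 : f x ≠ 0) :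
    HasDerivAt (fun t => ‖f t‖) (⟪f x, f'⟫ / ‖f x‖) x := by
  have hsq : ‖f x‖ ^ 2 ≠ 0 := by positivity
  convert hf.norm_sq.sqrt hsq using 1
  · simp only [sqrt_sq (norm_nonneg _)]
  · rw [sqrt_sq (norm_nonneg _)]; ring

theorem HasDerivAt.inv_norm_smul (hf : HasDerivAt f f' x) (h0 : f x ≠ 0) :
    HasDerivAt (fun t => ‖f t‖⁻¹ • f t)
      (‖f x‖⁻¹ • (f' - ⟪‖f x‖⁻¹ • f x, f'⟫ • ‖f x‖⁻¹ • f x)) x := by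
  refine ((hf.norm h0).inv (norm_ne_zero_iff.mpr h0)).smul hf |>.congr_deriv ?_
  simp only [Pi.inv_apply, real_inner_smul_left, smul_smul, smul_sub]
  module

end NormalizedCurve

theorem inner_vec2_cos_sin (a b : ℝ) :
    inner ℝ (vec2 (cos a) (sin a)) (vec2 (cos b) (sin b)) = cos (a - b) := by
  simp only [vec2, PiLp.inner_apply, RCLike.inner_apply, ringHom_apply, Fin.sum_univ_two,
    Matrix.cons_val_zero, Matrix.cons_val_one, Matrix.cons_val_fin_one, cos_sub]
  ring

/-- main computation of Corollary 2: derivative of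
`t ↦ ⟨(cos β, sin β), (T − p t)/‖T − p t‖⟩`. -/
theorem deriv_cos_bearing_minus_cruising
    (v θ β : ℝ) (p : ℝ → EuclideanSpace ℝ (Fin 2)) (t₀ : ℝ)
    (hp : HasDerivAt p (v • vec2 (cos θ) (sin θ)) t₀)
    (T : EuclideanSpace ℝ (Fin 2)) (hT : T ≠ p t₀)
    (φ : ℝ) (hφ : (‖T - p t₀‖)⁻¹ • (T - p t₀) = vec2 (cos φ) (sin φ)) :
    HasDerivAt
      (fun t => (inner ℝ (vec2 (cos β) (sin β)) ((‖T - p t‖)⁻¹ • (T - p t)) : ℝ))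
      (v * sin (β - φ) * sin (φ - θ) / ‖T - p t₀‖) t₀ := by
  have hu := (hp.const_sub T).inv_norm_smul (sub_ne_zero.mpr hT)
  rw [hφ] at hu
  refine (hasDerivAt_const t₀ (vec2 (cos β) (sin β))).inner ℝ hu |>.congr_deriv ?_
  have hcos : cos (β - θ) = cos (β - φ) * cos (φ - θ) - sin (β - φ) * sin (φ - θ) := by
    rw [← cos_add]; ring_nf
  simp only [inner_smul_right, inner_sub_right, inner_neg_right, inner_vec2_cos_sin,
    inner_zero_left, hcos]
  ring
end

section
/- Let Δ ∈ [0, π/2], s ∈ {−1, 1}, and β, φ ∈ ℝ with s·∠(φ − β) ∈ [0, Δ), and set θ := β + sΔ. Then sin(β − φ)·sin(φ − θ) ≥ 0, with equality if and only if ∠(φ − β) = 0. -/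
open Real

/-!
Normalizing `φ - β` changes the relevant sines only by multiples of `2π`, so with
`y := s·∠(φ − β) ∈ [0, Δ)` the product equals `sin y · sin (Δ − y)` (the sign `s` squares away).
Both angles `y` and `Δ − y` lie in `[0, π]`, and `y > 0` forces both into `(0, π)`.
-/

theorem angNorm_eq (a : ℝ) : angNorm a = a - ⌊(a + π) / (2 * π)⌋ * (2 * π) := by
  have h2π : (2 : ℝ) * π ≠ 0 := by positivity
  rw [angNorm, Int.fract]
  field_simp
  ring

theorem sin_angNorm (a : ℝ) : sin (angNorm a) = sin a := by
  rw [angNorm_eq, sin_sub_int_mul_two_pi]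

theorem sin_sub_angNorm (b a : ℝ) : sin (b - angNorm a) = sin (b - a) := by
  rw [angNorm_eq, sub_sub_eq_add_sub, add_comm, add_sub_assoc, add_comm, sin_add_int_mul_two_pi]

theorem sin_mul_sin_sign_mul_sub {s : ℝ} (hs : s = -1 ∨ s = 1) (x Δ : ℝ) :
    sin x * sin (s * Δ - x) = sin (s * x) * sin (Δ - s * x) := by
  rcases hs with rfl | rfl
  · rw [show -1 * Δ - x = -(Δ - -1 * x) by ring, sin_neg, neg_one_mul, sin_neg]
    ring
  · simp only [one_mul]

section

variable {y Δ : ℝ}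

theorem sin_mul_sin_sub_pos (hy : 0 < y) (hyΔ : y < Δ) (hΔ : Δ ≤ π) :
    0 < sin y * sin (Δ - y) :=
  mul_pos (sin_pos_of_pos_of_lt_pi hy (by linarith)) (sin_pos_of_pos_of_lt_pi (by linarith)
    (by linarith))

theorem sin_mul_sin_sub_nonneg (hy : 0 ≤ y) (hyΔ : y < Δ) (hΔ : Δ ≤ π) :
    0 ≤ sin y * sin (Δ - y) := by
  rcases hy.eq_or_lt with rfl | hy
  · simp
  · exact (sin_mul_sin_sub_pos hy hyΔ hΔ).le

theorem sin_mul_sin_sub_eq_zero_iff (hy : 0 ≤ y) (hyΔ : y < Δ) (hΔ : Δ ≤ π) :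
    sin y * sin (Δ - y) = 0 ↔ y = 0 := by
  refine ⟨fun h ↦ ?_, fun h ↦ by simp [h]⟩
  by_contra hy0
  exact (sin_mul_sin_sub_pos (lt_of_le_of_ne hy (Ne.symm hy0)) hyΔ hΔ).ne' h

end

/-- sign lemma for Corollary 2: in blocking mode,
`sin(β − φ)·sin(φ − θ) ≥ 0`, with equality iff `∠(φ − β) = 0`. -/
theorem blocking_sign_lemma
    (Δ : ℝ) (hΔ : Δ ∈ Set.Icc 0 (π / 2)) (s : ℝ) (hs : s = -1 ∨ s = 1)
    (β φ : ℝ) (hφ : s * angNorm (φ - β) ∈ Set.Ico 0 Δ) (θ : ℝ) (hθ : θ = β + s * Δ) :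
    0 ≤ sin (β - φ) * sin (φ - θ) ∧
      (sin (β - φ) * sin (φ - θ) = 0 ↔ angNorm (φ - β) = 0) := by
  have hΔπ : Δ ≤ π := by linarith [hΔ.2, pi_pos]
  have hprod : sin (β - φ) * sin (φ - θ) =
      sin (s * angNorm (φ - β)) * sin (Δ - s * angNorm (φ - β)) := by
    rw [← sin_mul_sin_sign_mul_sub hs, sin_angNorm, sin_sub_angNorm, hθ,
      show β - φ = -(φ - β) by ring, show φ - (β + s * Δ) = -(s * Δ - (φ - β)) by ring,
      sin_neg, sin_neg, neg_mul_neg]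
  have hs0 : s ≠ 0 := by rcases hs with rfl | rfl <;> norm_num
  rw [hprod]
  exact ⟨sin_mul_sin_sub_nonneg hφ.1 hφ.2 hΔπ,
    (sin_mul_sin_sub_eq_zero_iff hφ.1 hφ.2 hΔπ).trans (mul_eq_zero_iff_left hs0)⟩
end
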